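/- Let X → B be a Boolean set. Define x ∘ y = y|^{p(y)}_{p(x)∧p(y)}, y \ x = y|^{p(y)}_{p(y)\p(x)}, and x • y = x ∨ (y \ x). Then (X, •) is a band (• is associative and idempotent). -/
import Mathlib


/-- A presheaf of sets over a meet-semilattice `E`: a carrier `X` with projection
`p : X → E` and restriction maps `res x f h : X` for `f ≤ p x`, satisfying the
identity and composition laws. -/
structure PresheafOfSets (E : Type*) [SemilatticeInf E] where
  X : Type*
  p : X → E
  res : ∀ x : X, ∀ f : E, f ≤ p x → X
  p_res : ∀ x f h, p (res x f h) = f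
  res_self : ∀ x, res x (p x) le_rfl = x
  res_comp : ∀ x f g (hf : f ≤ p x) (_ : g ≤ f) (hg : g ≤ p x)
      (hg' : g ≤ p (res x f hf)), res (res x f hf) g hg' = res x g hg

namespace PresheafOfSets

variable {E : Type*} [SemilatticeInf E] (P : PresheafOfSets E)

/-- The natural partial order: `x ≤ y` iff `x` is the restriction of `y` to `p x`. -/
def le (x y : P.X) : Prop := ∃ h : P.p x ≤ P.p y, x = P.res y (P.p x) h

/-- The right normal band operation `x ∘ y = y|^{p y}_{p x ⊓ p y}`. -/
def circ (x y : P.X) : P.X := P.res y (P.p x ⊓ P.p y) inf_le_right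

/-- `m` is the meet of `x` and `y` with respect to the natural partial order. -/
def IsMeet (m x y : P.X) : Prop :=
  P.le m x ∧ P.le m y ∧ ∀ z, P.le z x → P.le z y → P.le z m

/-- `j` is the join of `x` and `y` with respect to the natural partial order. -/
def IsJoin (j x y : P.X) : Prop :=
  P.le x j ∧ P.le y j ∧ ∀ z, P.le x z → P.le y z → P.le j z

/-- `x ∼ y`: the meet `x ∧ y` exists and `p (x ∧ y) = p x ⊓ p y`. -/
def Compatible (x y : P.X) : Prop :=
  ∃ m, P.IsMeet m x y ∧ P.p m = P.p x ⊓ P.p y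

end PresheafOfSets

/-- A Boolean set: a presheaf of sets with global support over a generalized Boolean
algebra `B`, with a minimum element `zero`, joins of compatible pairs, and such that
`p x = ⊥` implies `x = zero`. -/
structure BooleanSet (B : Type*) [GeneralizedBooleanAlgebra B] extends PresheafOfSets B where
  p_surj : Function.Surjective toPresheafOfSets.p
  zero : toPresheafOfSets.X
  zero_le : ∀ x, toPresheafOfSets.le zero x
  eq_zero : ∀ x, toPresheafOfSets.p x = ⊥ → x = zero
  join_exists : ∀ x y, toPresheafOfSets.Compatible x y →
    ∃ j, toPresheafOfSets.IsJoin j x y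

namespace BooleanSet

variable {B : Type*} [GeneralizedBooleanAlgebra B] (S : BooleanSet B)

/-- `y \ x = y|^{p y}_{p y \ p x}`. -/
def minus (y x : S.X) : S.X := S.res y (S.p y \ S.p x) sdiff_le

end BooleanSet

section Aux

namespace PresheafOfSets

variable {E : Type*} [SemilatticeInf E] (P : PresheafOfSets E)

lemma res_eq_res {x y : P.X} (hxy : x = y) {e f : E} (hef : e = f)
    (hx : e ≤ P.p x) (hy : f ≤ P.p y) : P.res x e hx = P.res y f hy := by
  subst hxy; subst hef; rfl

lemma le_refl' (x : P.X) : P.le x x := ⟨le_rfl, (P.res_self x).symm⟩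

lemma res_le (x : P.X) (e : E) (he : e ≤ P.p x) : P.le (P.res x e he) x :=
  ⟨by rw [P.p_res]; exact he, (P.res_eq_res rfl (P.p_res x e he) _ he).symm⟩

lemma le_of_eq_res {a b : P.X} {e : E} (he : e ≤ P.p b) (h : a = P.res b e he) :
    P.le a b := h ▸ P.res_le b e he

lemma res_of_le {a b : P.X} (h : P.le a b) (e : E) (he : e ≤ P.p a)
    (he' : e ≤ P.p b) : P.res a e he = P.res b e he' := by
  obtain ⟨hp, ha⟩ := h
  have h2 : e ≤ P.p (P.res b (P.p a) hp) := by rw [P.p_res]; exact he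
  rw [P.res_eq_res ha rfl he h2, P.res_comp b (P.p a) e hp he he' h2]

lemma res_eq_of_le {a b : P.X} (h : P.le a b) {e : E} (hea : e = P.p a)
    (he' : e ≤ P.p b) : P.res b e he' = a := by
  rw [P.res_eq_res (rfl : b = b) hea he' (hea ▸ he'), ← P.res_of_le h _ le_rfl,
    P.res_self]

lemma le_trans' {a b c : P.X} (hab : P.le a b) (hbc : P.le b c) : P.le a c :=
  ⟨hab.1.trans hbc.1, hab.2.trans (P.res_of_le hbc _ hab.1 (hab.1.trans hbc.1))⟩

lemma le_antisymm' {a b : P.X} (hab : P.le a b) (hba : P.le b a) : a = b := by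
  have hp : P.p a = P.p b := le_antisymm hab.1 hba.1
  rw [hab.2, P.res_eq_res (rfl : b = b) hp hab.1 le_rfl, P.res_self]

end PresheafOfSets

namespace BooleanSet

variable {B : Type*} [GeneralizedBooleanAlgebra B] (S : BooleanSet B)

lemma p_zero : S.p S.zero = ⊥ := by
  obtain ⟨x, hx⟩ := S.p_surj ⊥
  exact le_antisymm (hx ▸ (S.zero_le x).1) bot_le

lemma p_minus (y x : S.X) : S.p (S.minus y x) = S.p y \ S.p x := S.p_res _ _ _

lemma join_unique {j j' x y : S.X} (h : S.IsJoin j x y) (h' : S.IsJoin j' x y) :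
    j = j' :=
  S.le_antisymm' (h.2.2 j' h'.1 h'.2.1) (h'.2.2 j h.1 h.2.1)

/-- An element whose support splits as `E1 ⊔ E2` is the join of its restrictions. -/
lemma isJoin_res (a : S.X) (E1 E2 : B) (h1 : E1 ≤ S.p a) (h2 : E2 ≤ S.p a)
    (hE : S.p a = E1 ⊔ E2) :
    S.IsJoin a (S.res a E1 h1) (S.res a E2 h2) := by
  have hm : E1 ⊓ E2 ≤ S.p a := inf_le_left.trans h1
  have hcompat : S.Compatible (S.res a E1 h1) (S.res a E2 h2) := by
    refine ⟨S.res a (E1 ⊓ E2) hm, ⟨?_, ?_, ?_⟩, ?_⟩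
    · refine S.le_of_eq_res (e := E1 ⊓ E2) (by rw [S.p_res]; exact inf_le_left) ?_
      exact (S.res_comp a E1 (E1 ⊓ E2) h1 inf_le_left hm _).symm
    · refine S.le_of_eq_res (e := E1 ⊓ E2) (by rw [S.p_res]; exact inf_le_right) ?_
      exact (S.res_comp a E2 (E1 ⊓ E2) h2 inf_le_right hm _).symm
    · intro z hz1 hz2
      have hz1p : S.p z ≤ E1 := by have := hz1.1; rwa [S.p_res] at this
      have hz2p : S.p z ≤ E2 := by have := hz2.1; rwa [S.p_res] at this
      have hzp : S.p z ≤ E1 ⊓ E2 := le_inf hz1p hz2p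
      refine S.le_of_eq_res (e := S.p z) (by rw [S.p_res]; exact hzp) ?_
      have e1 : S.res (S.res a E1 h1) (S.p z) hz1.1 = S.res a (S.p z) (hzp.trans hm) :=
        S.res_comp a E1 (S.p z) h1 hz1p (hzp.trans hm) _
      have e2 : S.res (S.res a (E1 ⊓ E2) hm) (S.p z)
          (by rw [S.p_res]; exact hzp) = S.res a (S.p z) (hzp.trans hm) :=
        S.res_comp a (E1 ⊓ E2) (S.p z) hm hzp (hzp.trans hm) _
      exact hz1.2.trans (e1.trans e2.symm)
    · rw [S.p_res, S.p_res, S.p_res]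
  obtain ⟨j, hj⟩ := S.join_exists _ _ hcompat
  have hja : S.le j a := hj.2.2 a (S.res_le a E1 h1) (S.res_le a E2 h2)
  have hpj : S.p j = S.p a := by
    refine le_antisymm hja.1 ?_
    rw [hE]
    refine sup_le ?_ ?_
    · have := hj.1.1; rwa [S.p_res] at this
    · have := hj.2.1.1; rwa [S.p_res] at this
  have haj : a = j := by
    rw [hja.2, S.res_eq_res (rfl : a = a) hpj hja.1 le_rfl, S.res_self]
  exact ⟨S.res_le a E1 h1, S.res_le a E2 h2,
    fun z hz1 hz2 => haj ▸ hj.2.2 z hz1 hz2⟩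

/-- Gluing: elements agreeing on the two pieces of a cover agree on the union. -/
lemma res_glue (c d : S.X) (E1 E2 : B) (h1c : E1 ≤ S.p c) (h2c : E2 ≤ S.p c)
    (h1d : E1 ≤ S.p d) (h2d : E2 ≤ S.p d)
    (hc : E1 ⊔ E2 ≤ S.p c) (hd : E1 ⊔ E2 ≤ S.p d)
    (h1 : S.res c E1 h1c = S.res d E1 h1d)
    (h2 : S.res c E2 h2c = S.res d E2 h2d) :
    S.res c (E1 ⊔ E2) hc = S.res d (E1 ⊔ E2) hd := by
  set a := S.res c (E1 ⊔ E2) hc with ha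
  set b := S.res d (E1 ⊔ E2) hd with hb
  have hpa : S.p a = E1 ⊔ E2 := S.p_res _ _ _
  have hpb : S.p b = E1 ⊔ E2 := S.p_res _ _ _
  have h1a : E1 ≤ S.p a := hpa ▸ le_sup_left
  have h2a : E2 ≤ S.p a := hpa ▸ le_sup_right
  have h1b : E1 ≤ S.p b := hpb ▸ le_sup_left
  have h2b : E2 ≤ S.p b := hpb ▸ le_sup_right
  have ra1 : S.res a E1 h1a = S.res c E1 h1c :=
    S.res_comp c (E1 ⊔ E2) E1 hc le_sup_left h1c h1a
  have ra2 : S.res a E2 h2a = S.res c E2 h2c :=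
    S.res_comp c (E1 ⊔ E2) E2 hc le_sup_right h2c h2a
  have rb1 : S.res b E1 h1b = S.res d E1 h1d :=
    S.res_comp d (E1 ⊔ E2) E1 hd le_sup_left h1d h1b
  have rb2 : S.res b E2 h2b = S.res d E2 h2d :=
    S.res_comp d (E1 ⊔ E2) E2 hd le_sup_right h2d h2b
  have hJa : S.IsJoin a (S.res a E1 h1a) (S.res a E2 h2a) :=
    S.isJoin_res a E1 E2 h1a h2a hpa
  have hJb : S.IsJoin b (S.res b E1 h1b) (S.res b E2 h2b) :=
    S.isJoin_res b E1 E2 h1b h2b hpb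
  rw [ra1, h1, ← rb1, ra2, h2, ← rb2] at hJa
  exact S.join_unique hJa hJb

/-- `x` and `y \ x` are compatible (their meet is `zero`). -/
lemma compat_minus (x y : S.X) : S.Compatible x (S.minus y x) := by
  refine ⟨S.zero, ⟨S.zero_le x, S.zero_le _, ?_⟩, ?_⟩
  · intro z hz1 hz2
    have hzp : S.p z ≤ S.p x ⊓ (S.p y \ S.p x) := by
      refine le_inf hz1.1 ?_
      have := hz2.1; rwa [S.p_minus] at this
    rw [inf_sdiff_self_right] at hzp
    have : z = S.zero := S.eq_zero z (le_antisymm hzp bot_le)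
    rw [this]; exact S.le_refl' _
  · rw [S.p_zero, S.p_minus, inf_sdiff_self_right]

noncomputable def bullet (x y : S.X) : S.X :=
  (S.join_exists x (S.minus y x) (S.compat_minus x y)).choose

lemma isJoin_bullet (x y : S.X) : S.IsJoin (S.bullet x y) x (S.minus y x) :=
  (S.join_exists x (S.minus y x) (S.compat_minus x y)).choose_spec

lemma p_bullet (x y : S.X) : S.p (S.bullet x y) = S.p x ⊔ S.p y := by
  have hj := S.isJoin_bullet x y
  set j := S.bullet x y
  have hle : S.p x ⊔ (S.p y \ S.p x) ≤ S.p j := by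
    refine sup_le hj.1.1 ?_
    have := hj.2.1.1; rwa [S.p_minus] at this
  have hge : S.p j ≤ S.p x ⊔ (S.p y \ S.p x) := by
    set e := S.p x ⊔ (S.p y \ S.p x) with he
    set j' := S.res j e hle with hj'
    have hx : S.le x j' := by
      refine S.le_of_eq_res (e := S.p x)
        (show S.p x ≤ S.p j' by rw [hj', S.p_res]; exact le_sup_left) ?_
      exact hj.1.2.trans
        (S.res_comp j e (S.p x) hle le_sup_left (le_sup_left.trans hle) _).symm
    have hm : S.le (S.minus y x) j' := by
      have hpm : S.p (S.minus y x) ≤ e := by rw [S.p_minus]; exact le_sup_right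
      refine S.le_of_eq_res (e := S.p (S.minus y x))
        (show S.p (S.minus y x) ≤ S.p j' by rw [hj', S.p_res]; exact hpm) ?_
      exact hj.2.1.2.trans
        (S.res_comp j e (S.p (S.minus y x)) hle hpm (hpm.trans hle) _).symm
    have := (hj.2.2 j' hx hm).1
    rwa [hj', S.p_res] at this
  have := le_antisymm hge hle
  rw [this, sup_sdiff_self_right]

lemma bullet_idem (x : S.X) : S.bullet x x = x := by
  have hj := S.isJoin_bullet x x
  have hmz : S.minus x x = S.zero := by
    refine S.eq_zero _ ?_
    rw [S.p_minus, sdiff_self]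
  rw [hmz] at hj
  have hj' : S.IsJoin x x S.zero :=
    ⟨S.le_refl' x, S.zero_le x, fun z hz _ => hz⟩
  exact S.join_unique hj hj'


lemma bullet_assoc (x y z : S.X) :
    S.bullet (S.bullet x y) z = S.bullet x (S.bullet y z) := by
  set xy := S.bullet x y with hxydef
  set yz := S.bullet y z with hyzdef
  set w := S.bullet xy z with hwdef
  set u := S.bullet x yz with hudef
  have hxy := S.isJoin_bullet x y
  have hyz := S.isJoin_bullet y z
  have hw := S.isJoin_bullet xy z
  have hu := S.isJoin_bullet x yz
  set E1 := S.p y \ S.p x with hE1def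
  set E2 := S.p z \ (S.p x ⊔ S.p y) with hE2def
  set E := (S.p y ⊔ S.p z) \ S.p x with hEdef
  -- lattice facts
  have hpxy : S.p xy = S.p x ⊔ S.p y := S.p_bullet x y
  have hpyz : S.p yz = S.p y ⊔ S.p z := S.p_bullet y z
  have hpw : S.p w = (S.p x ⊔ S.p y) ⊔ S.p z := by
    rw [hwdef, S.p_bullet, hpxy]
  have hpu : S.p u = S.p x ⊔ (S.p y ⊔ S.p z) := by
    rw [hudef, S.p_bullet, hpyz]
  have hE1E : E1 ≤ E := sdiff_le_sdiff le_sup_left le_rfl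
  have hE2E : E2 ≤ E := sdiff_le_sdiff le_sup_right le_sup_left
  have hEsplit : E = E1 ⊔ E2 := by
    refine le_antisymm ?_ (sup_le hE1E hE2E)
    rw [hEdef, sup_sdiff]
    refine sup_le le_sup_left ?_
    have hdec : S.p z \ S.p x =
        ((S.p z \ S.p x) ⊓ S.p y) ⊔ ((S.p z \ S.p x) \ S.p y) :=
      (sup_inf_sdiff _ _).symm
    rw [hdec]
    refine sup_le (le_sup_of_le_left ?_) (le_sup_of_le_right ?_)
    · rw [hE1def, le_sdiff]
      exact ⟨inf_le_right, (disjoint_sdiff_self_left.mono_left inf_le_left)⟩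
    · rw [hE2def, sdiff_sdiff_left, sup_comm]
  have hE1y : E1 ≤ S.p y := sdiff_le
  have hEyz : E ≤ S.p yz := by rw [hpyz]; exact sdiff_le
  have hE1yz : E1 ≤ S.p yz := hE1E.trans hEyz
  have hE2yz : E2 ≤ S.p yz := hE2E.trans hEyz
  have hEw : E ≤ S.p w := by
    rw [hpw]
    exact sdiff_le.trans (sup_le (le_sup_of_le_left le_sup_right) le_sup_right)
  have hE1w : E1 ≤ S.p w := hE1E.trans hEw
  have hE2w : E2 ≤ S.p w := hE2E.trans hEw
  have hEu : E ≤ S.p u := by rw [hpu]; exact sdiff_le.trans le_sup_right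
  have hE1u : E1 ≤ S.p u := hE1E.trans hEu
  have hE2u : E2 ≤ S.p u := hE2E.trans hEu
  have hE2z : E2 ≤ S.p z := sdiff_le
  have hE2zy : E2 ≤ S.p z \ S.p y := sdiff_le_sdiff le_rfl le_sup_right
  -- restrictions of yz
  have r_yz_E1 : S.res yz E1 hE1yz = S.res y E1 hE1y :=
    (S.res_of_le hyz.1 E1 hE1y hE1yz).symm
  have r_yz_E2 : S.res yz E2 hE2yz = S.res z E2 hE2z := by
    have h1 : S.res yz E2 hE2yz = S.res (S.minus z y) E2
        (by rw [S.p_minus]; exact hE2zy) :=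
      (S.res_of_le hyz.2.1 E2 (by rw [S.p_minus]; exact hE2zy) hE2yz).symm
    have h2 : S.res (S.minus z y) E2 (by rw [S.p_minus]; exact hE2zy) =
        S.res z E2 hE2z :=
      S.res_comp z (S.p z \ S.p y) E2 sdiff_le hE2zy hE2z _
    exact h1.trans h2
  -- restrictions of w
  have r_w_E1 : S.res w E1 hE1w = S.res y E1 hE1y := by
    have hmyx : S.le (S.minus y x) w := S.le_trans' hxy.2.1 hw.1
    exact S.res_eq_of_le hmyx (by rw [S.p_minus]) hE1w
  have r_w_E2 : S.res w E2 hE2w = S.res z E2 hE2z := by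
    have h1 : S.res w E2 hE2w = S.minus z xy :=
      S.res_eq_of_le hw.2.1 (by rw [S.p_minus, hpxy]) hE2w
    have h2 : S.minus z xy = S.res z E2 hE2z :=
      S.res_eq_res rfl (by rw [hpxy]) sdiff_le hE2z
    exact h1.trans h2
  -- restrictions of u agree with those of yz on E
  have key_u : ∀ e (heE : e ≤ E) (heu : e ≤ S.p u) (heyz : e ≤ S.p yz),
      S.res u e heu = S.res yz e heyz := by
    intro e heE heu heyz
    have hepm : e ≤ S.p (S.minus yz x) := by
      rw [S.p_minus, hpyz]; exact heE
    have h1 : S.res u e heu = S.res (S.minus yz x) e hepm :=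
      (S.res_of_le hu.2.1 e hepm heu).symm
    have h2 : S.res (S.minus yz x) e hepm = S.res yz e heyz :=
      S.res_comp yz (S.p yz \ S.p x) e sdiff_le (by rw [hpyz]; exact heE) heyz _
    exact h1.trans h2
  have r_u_E1 : S.res u E1 hE1u = S.res y E1 hE1y :=
    (key_u E1 hE1E hE1u hE1yz).trans r_yz_E1
  have r_u_E2 : S.res u E2 hE2u = S.res z E2 hE2z :=
    (key_u E2 hE2E hE2u hE2yz).trans r_yz_E2
  -- w and yz agree on E (gluing)
  have r_w_E : S.res w E hEw = S.res yz E hEyz := by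
    have hg : S.res w (E1 ⊔ E2) (hEsplit ▸ hEw) =
        S.res yz (E1 ⊔ E2) (hEsplit ▸ hEyz) :=
      S.res_glue w yz E1 E2 hE1w hE2w hE1yz hE2yz (hEsplit ▸ hEw)
        (hEsplit ▸ hEyz) (r_w_E1.trans r_yz_E1.symm) (r_w_E2.trans r_yz_E2.symm)
    calc S.res w E hEw = S.res w (E1 ⊔ E2) (hEsplit ▸ hEw) :=
          S.res_eq_res rfl hEsplit _ _
      _ = S.res yz (E1 ⊔ E2) (hEsplit ▸ hEyz) := hg
      _ = S.res yz E hEyz := S.res_eq_res rfl hEsplit.symm _ _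
  -- u ≤ w
  have hxw : S.le x w := S.le_trans' hxy.1 hw.1
  have hmw : S.le (S.minus yz x) w := by
    refine S.le_of_eq_res (e := E) hEw ?_
    have h2 : S.minus yz x = S.res yz E hEyz :=
      S.res_eq_res rfl (by rw [hpyz]) sdiff_le hEyz
    exact h2.trans r_w_E.symm
  have huw : S.le u w := hu.2.2 w hxw hmw
  -- w ≤ u
  have hxyu : S.le xy u := by
    refine hxy.2.2 u hu.1 ?_
    exact S.le_of_eq_res (e := E1) hE1u r_u_E1.symm
  have hmzu : S.le (S.minus z xy) u := by
    refine S.le_of_eq_res (e := E2) hE2u ?_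
    have h2 : S.minus z xy = S.res z E2 hE2z :=
      S.res_eq_res rfl (by rw [hpxy]) sdiff_le hE2z
    exact h2.trans r_u_E2.symm
  have hwu : S.le w u := hw.2.2 u hxyu hmzu
  exact S.le_antisymm' hwu huw


end BooleanSet

end Aux

/-- In a Boolean set, the operation `x • y = x ∨ (y \ x)` is well defined (the join
exists) and makes `X` a band: `•` is idempotent and associative. -/
theorem booleanSet_bullet_band {B : Type*} [GeneralizedBooleanAlgebra B] (S : BooleanSet B) :
    ∃ bullet : S.X → S.X → S.X,
      (∀ x y, S.IsJoin (bullet x y) x (S.minus y x)) ∧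
      (∀ x, bullet x x = x) ∧
      (∀ x y z, bullet (bullet x y) z = bullet x (bullet y z)) := by
  exact ⟨S.bullet, S.isJoin_bullet, S.bullet_idem, S.bullet_assoc⟩
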